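/- Let $0<p,q<\infty$ with $p\ne q$, and let $\mu$ be a finite positive Borel measure on $\mathbb{D}$. Then there do not exist constants $C>c>0$ such that $c\|f\|_{H^p}\le\|f\|_{L^q(\mu)}\le C\|f\|_{H^p}$ for all $f\in H^p$. -/

import Mathlib

open MeasureTheory Set ENNReal

noncomputable section

/-- The open unit disk in the complex plane. -/
def unitDisk : Set ℂ := Metric.ball 0 1

/-- The `L^q` (quasi)norm, as an extended real, of a complex-valued function
with respect to a measure. -/
def lqNorm {α : Type*} [MeasurableSpace α] (q : ℝ) (μ : Measure α) (f : α → ℂ) : ℝ≥0∞ :=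
  (∫⁻ x, (‖f x‖₊ : ℝ≥0∞) ^ q ∂μ) ^ (1 / q)

/-- The `p`-th integral mean of `f` over the circle of radius `r`, with respect to
normalized arc length measure. -/
def circleMean (p : ℝ) (r : ℝ) (f : ℂ → ℂ) : ℝ≥0∞ :=
  ((∫⁻ θ in Set.Ioc (0 : ℝ) (2 * Real.pi),
      (‖f ((r : ℂ) * Complex.exp ((θ : ℂ) * Complex.I))‖₊ : ℝ≥0∞) ^ p) /
    ENNReal.ofReal (2 * Real.pi)) ^ (1 / p)

/-- The Hardy space `H^p` (quasi)norm: the supremum of the integral means over circles. -/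
def hardyNorm (p : ℝ) (f : ℂ → ℂ) : ℝ≥0∞ :=
  ⨆ r : Set.Ioo (0 : ℝ) 1, circleMean p (r : ℝ) f

/-- Membership in the Hardy space `H^p` of the unit disk. -/
def MemHardy (p : ℝ) (f : ℂ → ℂ) : Prop :=
  DifferentiableOn ℂ f unitDisk ∧ hardyNorm p f < ⊤

/-- Membership in `H^∞`: bounded holomorphic functions on the unit disk. -/
def MemHinf (f : ℂ → ℂ) : Prop :=
  DifferentiableOn ℂ f unitDisk ∧ ∃ C : ℝ, ∀ z ∈ unitDisk, ‖f z‖ ≤ C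

/-- `z` is an `H^∞`-interpolating sequence: every bounded sequence of values can be
interpolated by a bounded holomorphic function. -/
def InterpolatingSeq (z : ℕ → ℂ) : Prop :=
  ∀ w : ℕ → ℂ, (∃ M : ℝ, ∀ n, ‖w n‖ ≤ M) → ∃ f, MemHinf f ∧ ∀ n, f (z n) = w n

/-- `μ` is a `(p,q)`-Carleson measure: the embedding `H^p ⊆ L^q(μ)` holds (with its norm
estimate, which is automatic by the closed graph theorem). -/
def CarlesonPQ (p q : ℝ) (μ : Measure ℂ) : Prop :=
  ∃ C : ℝ, 0 < C ∧ ∀ f, MemHardy p f → lqNorm q μ f ≤ ENNReal.ofReal C * hardyNorm p f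

/-- The range of the embedding `j_{p,q}(μ) : H^p ↪ L^q(μ)` is closed in `L^q(μ)`:
every element of `L^q(μ)` which can be approximated in `L^q(μ)` by `H^p` functions
agrees `μ`-a.e. with an `H^p` function. -/
def HardyClosedRange (p q : ℝ) (μ : Measure ℂ) : Prop :=
  ∀ g : ℂ → ℂ, lqNorm q μ g < ⊤ →
    (∀ ε : ℝ, 0 < ε → ∃ f, MemHardy p f ∧ lqNorm q μ (fun x => f x - g x) < ENNReal.ofReal ε) →
    ∃ f, MemHardy p f ∧ f =ᵐ[μ] g

/-- Normalized area measure on the unit disk. -/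
def normArea : Measure ℂ := (ENNReal.ofReal Real.pi)⁻¹ • ((volume : Measure ℂ).restrict unitDisk)

/-- The Bergman space `A^p` (quasi)norm. -/
def bergmanNorm (p : ℝ) (f : ℂ → ℂ) : ℝ≥0∞ := lqNorm p normArea f

/-- Membership in the Bergman space `A^p` of the unit disk. -/
def MemBergman (p : ℝ) (f : ℂ → ℂ) : Prop :=
  DifferentiableOn ℂ f unitDisk ∧ bergmanNorm p f < ⊤

/-- `μ` is a `(p,q)`-Bergman-Carleson measure: `A^p ⊆ L^q(μ)` with its norm estimate. -/
def BergmanCarlesonPQ (p q : ℝ) (μ : Measure ℂ) : Prop :=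
  ∃ C : ℝ, 0 < C ∧ ∀ f, MemBergman p f → lqNorm q μ f ≤ ENNReal.ofReal C * bergmanNorm p f

/-- `μ` is a sampling measure for `A^p`: two-sided norm equivalence on `A^p`. -/
def SamplingMeasure (p : ℝ) (μ : Measure ℂ) : Prop :=
  BergmanCarlesonPQ p p μ ∧
    ∃ c : ℝ, 0 < c ∧ ∀ f, MemBergman p f →
      ENNReal.ofReal c * bergmanNorm p f ≤ lqNorm p μ f

/-- The range of the embedding `J_{p,q}(μ) : A^p ↪ L^q(μ)` is closed in `L^q(μ)`. -/
def BergmanClosedRange (p q : ℝ) (μ : Measure ℂ) : Prop :=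
  ∀ g : ℂ → ℂ, lqNorm q μ g < ⊤ →
    (∀ ε : ℝ, 0 < ε → ∃ f, MemBergman p f ∧ lqNorm q μ (fun x => f x - g x) < ENNReal.ofReal ε) →
    ∃ f, MemBergman p f ∧ f =ᵐ[μ] g

/-- `z` is an `A^p`-interpolating sequence: the trace space `A^p|_z` coincides with the
weighted sequence space `{w : ∑ |w n|^p (1-|z n|)^2 < ∞}`. -/
def APInterpolating (p : ℝ) (z : ℕ → ℂ) : Prop :=
  (∀ f, MemBergman p f →
      ∑' n, ENNReal.ofReal ((1 - ‖z n‖) ^ 2) * (‖f (z n)‖₊ : ℝ≥0∞) ^ p < ⊤) ∧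
  (∀ w : ℕ → ℂ, ∑' n, ENNReal.ofReal ((1 - ‖z n‖) ^ 2) * (‖w n‖₊ : ℝ≥0∞) ^ p < ⊤ →
      ∃ f, MemBergman p f ∧ ∀ n, f (z n) = w n)

/-- The trace (quasi)norm on `H^p|_z` of a sequence of values `W`. -/
def hardyTraceNorm (p : ℝ) (z : ℕ → ℂ) (W : ℕ → ℂ) : ℝ≥0∞ :=
  sInf {t : ℝ≥0∞ | ∃ f, MemHardy p f ∧ (∀ n, f (z n) = W n) ∧ t = hardyNorm p f}

/-- The trace (quasi)norm on `A^p|_z` of a sequence of values `W`. -/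
def bergmanTraceNorm (p : ℝ) (z : ℕ → ℂ) (W : ℕ → ℂ) : ℝ≥0∞ :=
  sInf {t : ℝ≥0∞ | ∃ f, MemBergman p f ∧ (∀ n, f (z n) = W n) ∧ t = bergmanNorm p f}

/-- The trace space `H^p|_z` is an ideal space: multiplication by sequences bounded by `1`
acts uniformly boundedly on it. -/
def IdealHardyTrace (p : ℝ) (z : ℕ → ℂ) : Prop :=
  ∃ K : ℝ, 0 < K ∧ ∀ m W : ℕ → ℂ, (∀ n, ‖m n‖ ≤ 1) →
    hardyTraceNorm p z (fun n => m n * W n) ≤ ENNReal.ofReal K * hardyTraceNorm p z W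

/-- The trace space `A^p|_z` is an ideal space. -/
def IdealBergmanTrace (p : ℝ) (z : ℕ → ℂ) : Prop :=
  ∃ K : ℝ, 0 < K ∧ ∀ m W : ℕ → ℂ, (∀ n, ‖m n‖ ≤ 1) →
    bergmanTraceNorm p z (fun n => m n * W n) ≤ ENNReal.ofReal K * bergmanTraceNorm p z W

/-!
The monomials `z ^ n` all have `H^p`-norm `1`, while `μ` lives on the open disk, where
`|z| ^ n → 0`; by dominated convergence their `L^q(μ)`-norms tend to `0`, so no lower
estimate `c ‖f‖_{H^p} ≤ ‖f‖_{L^q(μ)}` with `c > 0` can hold.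
-/

open Filter Topology

lemma circleMean_pow {p : ℝ} (hp : p ≠ 0) {r : ℝ} (hr : 0 ≤ r) (n : ℕ) :
    circleMean p r (· ^ n) = ENNReal.ofReal (r ^ n) := by
  have hnorm : ∀ θ : ℝ, ‖((r : ℂ) * Complex.exp ((θ : ℂ) * Complex.I)) ^ n‖₊ = ‖r ^ n‖₊ := by
    intro θ
    ext
    simp
  have h2pi : ENNReal.ofReal (2 * Real.pi) ≠ 0 := by simp [Real.pi_pos]
  unfold circleMean
  simp only [hnorm]
  rw [setLIntegral_const, Real.volume_Ioc, sub_zero, mul_div_assoc,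
    ENNReal.div_self h2pi ENNReal.ofReal_ne_top, mul_one, ← ENNReal.rpow_mul, mul_one_div,
    div_self hp, ENNReal.rpow_one, ← ENNReal.ofReal_coe_nnreal, coe_nnnorm,
    Real.norm_of_nonneg (by positivity)]

lemma hardyNorm_pow {p : ℝ} (hp : p ≠ 0) (n : ℕ) : hardyNorm p (· ^ n) = 1 := by
  unfold hardyNorm
  refine le_antisymm (iSup_le fun r => ?_) ?_
  · rw [circleMean_pow hp r.2.1.le]
    exact ENNReal.ofReal_le_one.2 (pow_le_one₀ r.2.1.le r.2.2.le)
  · have hcont : Continuous fun r : ℝ => ENNReal.ofReal (r ^ n) :=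
      ENNReal.continuous_ofReal.comp (continuous_pow n)
    have hlim := (hcont.tendsto' 1 1 (by simp)).mono_left (nhdsWithin_le_nhds (s := Iio 1))
    refine le_of_tendsto hlim ?_
    filter_upwards [Ioo_mem_nhdsLT zero_lt_one] with r hr
    rw [← circleMean_pow hp hr.1.le]
    exact le_iSup (fun r : Ioo (0 : ℝ) 1 => circleMean p r (· ^ n)) ⟨r, hr⟩

lemma memHardy_pow {p : ℝ} (hp : p ≠ 0) (n : ℕ) : MemHardy p (· ^ n) :=
  ⟨(differentiable_pow n).differentiableOn, by simp [hardyNorm_pow hp]⟩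

lemma tendsto_lqNorm_pow_atTop {q : ℝ} (hq : 0 < q) {μ : Measure ℂ} [IsFiniteMeasure μ]
    (hμ : ∀ᵐ z ∂μ, ‖z‖ < 1) :
    Tendsto (fun n : ℕ => lqNorm q μ (· ^ n)) atTop (𝓝 0) := by
  have hμ' : ∀ᵐ z ∂μ, (‖z‖₊ : ℝ≥0∞) < 1 := by
    filter_upwards [hμ] with z hz
    exact ENNReal.coe_lt_one_iff.2 (by exact_mod_cast hz)
  have hint : Tendsto (fun n : ℕ => ∫⁻ z, (‖z ^ n‖₊ : ℝ≥0∞) ^ q ∂μ) atTop (𝓝 0) := by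
    have hdom := tendsto_lintegral_of_dominated_convergence (μ := μ) (bound := fun _ => 1)
      (F := fun (n : ℕ) (z : ℂ) => (‖z ^ n‖₊ : ℝ≥0∞) ^ q) (f := fun _ => 0)
      (fun n => ((measurable_id.pow_const n).nnnorm.coe_nnreal_ennreal).pow_const q)
      (fun n => by
        filter_upwards [hμ'] with z hz
        simpa using ENNReal.rpow_le_one (pow_le_one' hz.le n) hq.le)
      (by simp [measure_ne_top μ])
      (by
        filter_upwards [hμ'] with z hz
        have := ((ENNReal.continuous_rpow_const (y := q)).tendsto 0).comp
          (ENNReal.tendsto_pow_atTop_nhds_zero_of_lt_one hz)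
        simpa [Function.comp_def, ENNReal.zero_rpow_of_pos hq] using this)
    simpa using hdom
  have hroot := (ENNReal.continuous_rpow_const (y := 1 / q)).tendsto 0
  simpa [lqNorm, Function.comp_def, ENNReal.zero_rpow_of_pos (inv_pos.2 hq)] using
    hroot.comp hint

theorem stmt7_general (p q : ℝ) (hp : 0 < p) (hq : 0 < q)
    (μ : Measure ℂ) [IsFiniteMeasure μ] (hsupp : μ unitDiskᶜ = 0) :
    ¬ ∃ c C : ℝ, 0 < c ∧ c < C ∧ ∀ f, MemHardy p f →
        ENNReal.ofReal c * hardyNorm p f ≤ lqNorm q μ f ∧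
          lqNorm q μ f ≤ ENNReal.ofReal C * hardyNorm p f := by
  rintro ⟨c, C, hc, -, hest⟩
  have hμ : ∀ᵐ z ∂μ, ‖z‖ < 1 := by
    filter_upwards [measure_eq_zero_iff_ae_notMem.1 hsupp] with z hz
    simpa [unitDisk] using hz
  have hlower : ∀ n : ℕ, ENNReal.ofReal c ≤ lqNorm q μ (· ^ n) := fun n => by
    simpa [hardyNorm_pow hp.ne'] using (hest _ (memHardy_pow hp.ne' n)).1
  have hc0 : ENNReal.ofReal c ≤ 0 := ge_of_tendsto' (tendsto_lqNorm_pow_atTop hq hμ) hlower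
  exact (ENNReal.ofReal_pos.2 hc).ne' (le_antisymm hc0 bot_le)

/-- for `p ≠ q` there is no two-sided estimate
`c‖f‖_{H^p} ≤ ‖f‖_{L^q(μ)} ≤ C‖f‖_{H^p}` on `H^p` for a finite measure `μ` on the disk. -/
theorem stmt7 (p q : ℝ) (hp : 0 < p) (hq : 0 < q) (hpq : p ≠ q)
    (μ : Measure ℂ) [IsFiniteMeasure μ] (hsupp : μ unitDiskᶜ = 0) :
    ¬ ∃ c C : ℝ, 0 < c ∧ c < C ∧ ∀ f, MemHardy p f →
        ENNReal.ofReal c * hardyNorm p f ≤ lqNorm q μ f ∧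
          lqNorm q μ f ≤ ENNReal.ofReal C * hardyNorm p f :=
  stmt7_general p q hp hq μ hsupp
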